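/- Assume −a0/a1 > x_T > d2 > d1 and d2 + a0/a1 ≤ (x_T + a0/a1)·cosh(a1·T). Then for every x ∈ (d1,d2) and every s ∈ [0,T), the function t ↦ x⁰_{x,s}(t) is monotone nondecreasing on [s,T]. -/

import Mathlib

/-!
With `u = -(x + a0/a1)` and `v = -(x_T + a0/a1)`, the derivative of the trajectory is
`a1 / sinh (a1 (T - s)) * (u cosh (a1 (T - t)) - v cosh (a1 (t - s)))`. The prefactor is
nonnegative because `sinh` preserves sign, and the bracket is nonnegative because
`v cosh (a1 (t - s)) ≤ v cosh (a1 T) ≤ u ≤ u cosh (a1 (T - t))`, the middle step being the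
hypothesis on `d2` together with `x < d2`.
-/

/-- The deterministic trajectory `x⁰_{x,s}`. -/
noncomputable def traj (a0 a1 T xT x s t : ℝ) : ℝ :=
  (x + a0 / a1) * Real.sinh (a1 * (T - t)) / Real.sinh (a1 * (T - s)) +
    (xT + a0 / a1) * Real.sinh (a1 * (t - s)) / Real.sinh (a1 * (T - s)) - a0 / a1

open Real

lemma div_sinh_mul_nonneg (a : ℝ) {r : ℝ} (hr : 0 ≤ r) : 0 ≤ a / sinh (a * r) := by
  rcases le_total 0 a with ha | ha
  · exact div_nonneg ha (sinh_nonneg_iff.mpr (mul_nonneg ha hr))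
  · exact div_nonneg_of_nonpos ha (sinh_nonpos_iff.mpr (mul_nonpos_of_nonpos_of_nonneg ha hr))

lemma mul_cosh_le_mul_cosh_of_mul_cosh_le {p q A B : ℝ} (C : ℝ) (hq : 0 ≤ q) (hBA : |B| ≤ |A|)
    (hp : q * cosh A ≤ p) : q * cosh B ≤ p * cosh C := by
  have hp0 : 0 ≤ p := (mul_nonneg hq (cosh_pos A).le).trans hp
  calc q * cosh B ≤ q * cosh A := by gcongr; exact cosh_le_cosh.mpr hBA
    _ ≤ p := hp
    _ ≤ p * cosh C := le_mul_of_one_le_right hp0 (one_le_cosh C)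

lemma hasDerivAt_traj (a0 a1 T xT x s t : ℝ) :
    HasDerivAt (traj a0 a1 T xT x s)
      (a1 / sinh (a1 * (T - s)) *
        ((xT + a0 / a1) * cosh (a1 * (t - s)) - (x + a0 / a1) * cosh (a1 * (T - t)))) t := by
  have hback : HasDerivAt (fun t => sinh (a1 * (T - t))) (cosh (a1 * (T - t)) * (a1 * -1)) t :=
    (hasDerivAt_sinh _).comp t (((hasDerivAt_id t).const_sub T).const_mul a1)
  have hfwd : HasDerivAt (fun t => sinh (a1 * (t - s))) (cosh (a1 * (t - s)) * (a1 * 1)) t :=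
    (hasDerivAt_sinh _).comp t (((hasDerivAt_id t).sub_const s).const_mul a1)
  exact ((((hback.const_mul (x + a0 / a1)).div_const (sinh (a1 * (T - s)))).add
    ((hfwd.const_mul (xT + a0 / a1)).div_const (sinh (a1 * (T - s))))).sub_const
      (a0 / a1)).congr_deriv (by ring)

theorem stmt_3_general (a0 a1 T xT d1 d2 : ℝ)
    (h1 : -(a0 / a1) > xT)
    (h4 : d2 + a0 / a1 ≤ (xT + a0 / a1) * Real.cosh (a1 * T)) :
    ∀ x ∈ Set.Ioo d1 d2, ∀ s, 0 ≤ s → s < T →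
      MonotoneOn (traj a0 a1 T xT x s) (Set.Icc s T) := by
  intro x hx s hs0 hsT
  have hderiv := hasDerivAt_traj a0 a1 T xT x s
  refine monotoneOn_of_hasDerivWithinAt_nonneg (convex_Icc s T)
    (fun t _ => (hderiv t).continuousAt.continuousWithinAt) (fun t _ => (hderiv t).hasDerivWithinAt) ?_
  intro t ht
  obtain ⟨hst, htT⟩ : s < t ∧ t < T := by rwa [interior_Icc] at ht
  refine mul_nonneg (div_sinh_mul_nonneg a1 (by linarith)) ?_
  have hBA : |a1 * (t - s)| ≤ |a1 * T| := by
    rw [abs_mul, abs_mul, abs_of_nonneg (by linarith : 0 ≤ t - s), abs_of_nonneg (by linarith : 0 ≤ T)]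
    gcongr
    linarith
  have hcosh := mul_cosh_le_mul_cosh_of_mul_cosh_le (a1 * (T - t)) (by linarith) hBA
    (by linarith [hx.2] : -(xT + a0 / a1) * cosh (a1 * T) ≤ -(x + a0 / a1))
  linarith

theorem stmt_3 (a0 a1 T xT d1 d2 : ℝ) (ha1 : a1 ≠ 0) (hT : 0 < T)
    (h1 : -(a0 / a1) > xT) (h2 : xT > d2) (h3 : d2 > d1)
    (h4 : d2 + a0 / a1 ≤ (xT + a0 / a1) * Real.cosh (a1 * T)) :
    ∀ x ∈ Set.Ioo d1 d2, ∀ s, 0 ≤ s → s < T →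
      MonotoneOn (traj a0 a1 T xT x s) (Set.Icc s T) :=
  stmt_3_general a0 a1 T xT d1 d2 h1 h4
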